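/- arXiv:1608.02486 — 8 statements merged into one kernel-verified Lean document; each statement's English description precedes it below -/
import Mathlib

section
/- Let L be a Lie ring and let x₁, x₂, x₃, x₄ ∈ L. Then the sum of ⁅x_{σ(1)}, ⁅x_{σ(2)}, ⁅x_{σ(3)}, x_{σ(4)}⁆⁆⁆ over the twelve even permutations σ of {1,2,3,4} vanishes; explicitly, ⁅x₁,⁅x₂,⁅x₃,x₄⁆⁆⁆ + ⁅x₁,⁅x₃,⁅x₄,x₂⁆⁆⁆ + ⁅x₁,⁅x₄,⁅x₂,x₃⁆⁆⁆ + ⁅x₂,⁅x₁,⁅x₄,x₃⁆⁆⁆ + ⁅x₂,⁅x₃,⁅x₁,x₄⁆⁆⁆ + ⁅x₂,⁅x₄,⁅x₃,x₁⁆⁆⁆ + ⁅x₃,⁅x₁,⁅x₂,x₄⁆⁆⁆ + ⁅x₃,⁅x₂,⁅x₄,x₁⁆⁆⁆ + ⁅x₃,⁅x₄,⁅x₁,x₂⁆⁆⁆ + ⁅x₄,⁅x₁,⁅x₃,x₂⁆⁆⁆ + ⁅x₄,⁅x₂,⁅x₁,x₃⁆⁆⁆ + ⁅x₄,⁅x₃,⁅x₂,x₁⁆⁆⁆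 = 0. -/
theorem lie_lie_jacobi {L : Type*} [LieRing L] (w x y z : L) :
    ⁅w, ⁅x, ⁅y, z⁆⁆⁆ + ⁅w, ⁅y, ⁅z, x⁆⁆⁆ + ⁅w, ⁅z, ⁅x, y⁆⁆⁆ = 0 := by
  rw [← lie_add, ← lie_add, lie_jacobi, lie_zero]

/-- The four-dimensional analogue of the Jacobi identity in a Lie ring: the sum of
`⁅x_{σ 1}, ⁅x_{σ 2}, ⁅x_{σ 3}, x_{σ 4}⁆⁆⁆` over the twelve even permutations `σ` of
`{1,2,3,4}` vanishes. -/
theorem four_dim_jacobi_lieRing {L : Type*} [LieRing L] (x₁ x₂ x₃ x₄ : L) :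
    ⁅x₁, ⁅x₂, ⁅x₃, x₄⁆⁆⁆ + ⁅x₁, ⁅x₃, ⁅x₄, x₂⁆⁆⁆ + ⁅x₁, ⁅x₄, ⁅x₂, x₃⁆⁆⁆ +
      ⁅x₂, ⁅x₁, ⁅x₄, x₃⁆⁆⁆ + ⁅x₂, ⁅x₃, ⁅x₁, x₄⁆⁆⁆ + ⁅x₂, ⁅x₄, ⁅x₃, x₁⁆⁆⁆ +
      ⁅x₃, ⁅x₁, ⁅x₂, x₄⁆⁆⁆ + ⁅x₃, ⁅x₂, ⁅x₄, x₁⁆⁆⁆ + ⁅x₃, ⁅x₄, ⁅x₁, x₂⁆⁆⁆ +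
      ⁅x₄, ⁅x₁, ⁅x₃, x₂⁆⁆⁆ + ⁅x₄, ⁅x₂, ⁅x₁, x₃⁆⁆⁆ + ⁅x₄, ⁅x₃, ⁅x₂, x₁⁆⁆⁆ = 0 := by
  linear_combination (norm := abel) lie_lie_jacobi x₁ x₂ x₃ x₄ + lie_lie_jacobi x₂ x₁ x₄ x₃ +
    lie_lie_jacobi x₃ x₁ x₂ x₄ + lie_lie_jacobi x₄ x₁ x₃ x₂
end

section
/- Let R be a commutative ring, L a Lie algebra over R, and x : Fin 4 → L any function. Then the sum over all σ in the alternating group of Fin 4 of ⁅x(σ 0), ⁅x(σ 1), ⁅x(σ 2), x(σ 3)⁆⁆⁆ equals 0. -/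
/-!
Right multiplication by the 3-cycle `c` permuting the positions `1, 2, 3` partitions the
alternating group into cosets `{σ, σc, σc²}`. The three terms of such a coset add up to
`⁅x (σ 0), J⁆`, where `J` is a Jacobi sum of `x (σ 1), x (σ 2), x (σ 3)`, so each coset
contributes zero.
-/

theorem Subgroup.sum_eq_zero_of_sum_mul_eq_zero {G M : Type*} [Group G] [Fintype G]
    [AddCommMonoid M] (H : Subgroup G) [Fintype H] (f : G → M)
    (h : ∀ g, ∑ k : H, f (g * k) = 0) : ∑ g, f g = 0 := by
  classical
  obtain ⟨S, hS, -⟩ := H.exists_isComplement_left 1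
  rw [← hS.sum_comp, Fintype.sum_prod_type]
  exact Finset.sum_eq_zero fun s _ => h s

theorem sum_eq_zero_of_sum_mul_pow_eq_zero {G M : Type*} [Group G] [Fintype G]
    [AddCommMonoid M] (c : G) (f : G → M)
    (h : ∀ g, ∑ k : Fin (orderOf c), f (g * c ^ (k : ℕ)) = 0) : ∑ g, f g = 0 := by
  classical
  refine (Subgroup.zpowers c).sum_eq_zero_of_sum_mul_eq_zero f fun g => ?_
  rw [← (finEquivZPowers (isOfFinOrder_of_finite c)).sum_comp]
  exact h g

-- `1 ↦ 2 ↦ 3 ↦ 1`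
def cycleOneTwoThree : alternatingGroup (Fin 4) :=
  ⟨Equiv.swap 1 2 * Equiv.swap 2 3, Equiv.Perm.mem_alternatingGroup.mpr (by decide)⟩

theorem orderOf_cycleOneTwoThree : orderOf cycleOneTwoThree = 3 := by
  apply orderOf_eq_prime <;> decide

theorem sum_alternatingGroup_jacobi_general {L : Type*} [LieRing L] (x : Fin 4 → L) :
    ∑ σ : alternatingGroup (Fin 4),
      ⁅x ((σ : Equiv.Perm (Fin 4)) 0),
        ⁅x ((σ : Equiv.Perm (Fin 4)) 1),
          ⁅x ((σ : Equiv.Perm (Fin 4)) 2), x ((σ : Equiv.Perm (Fin 4)) 3)⁆⁆⁆ = 0 := by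
  refine sum_eq_zero_of_sum_mul_pow_eq_zero cycleOneTwoThree _ fun σ => ?_
  rw [orderOf_cycleOneTwoThree, Fin.sum_univ_three]
  calc _ = ⁅x (σ.1 0), ⁅x (σ.1 1), ⁅x (σ.1 2), x (σ.1 3)⁆⁆ + ⁅x (σ.1 2), ⁅x (σ.1 3), x (σ.1 1)⁆⁆ +
          ⁅x (σ.1 3), ⁅x (σ.1 1), x (σ.1 2)⁆⁆⁆ := by
        simp +decide [cycleOneTwoThree, pow_two, Equiv.swap_apply_of_ne_of_ne, lie_add]
    _ = 0 := by rw [lie_jacobi, lie_zero]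

/-- The sum over all even permutations `σ` of `Fin 4` of the iterated brackets
`⁅x (σ 0), ⁅x (σ 1), ⁅x (σ 2), x (σ 3)⁆⁆⁆` vanishes in any Lie algebra `L`
over a commutative ring `R`. -/
theorem sum_alternatingGroup_jacobi {R : Type*} [CommRing R] {L : Type*} [LieRing L]
    [LieAlgebra R L] (x : Fin 4 → L) :
    ∑ σ : alternatingGroup (Fin 4),
      ⁅x ((σ : Equiv.Perm (Fin 4)) 0),
        ⁅x ((σ : Equiv.Perm (Fin 4)) 1),
          ⁅x ((σ : Equiv.Perm (Fin 4)) 2), x ((σ : Equiv.Perm (Fin 4)) 3)⁆⁆⁆ = 0 :=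
  sum_alternatingGroup_jacobi_general x
end

section
/- Let R be a commutative ring, B = R[x,y]/(x², y²) and A = R[x,y,z]/(x², y², z², xz, yz). Let φ₁, φ₂ : A → B be the R-algebra homomorphisms determined by φ₁(x) = x, φ₁(y) = y, φ₁(z) = xy and φ₂(x) = x, φ₂(y) = y, φ₂(z) = 0 (both well defined). Then for any b₁, b₂ ∈ B whose difference b₁ − b₂ lies in the ideal of B generated by xy, there exists a unique a ∈ A with φ₁(a) = b₁ and φ₂(a) = b₂. -/
/-!
Since `z` annihilates `x`, `y` and `z` in `A`, multiplication by `z` only sees constant terms,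
so every element of `A` is `s(x, y) + c z` with `s ∈ R[x,y]` and `c ∈ R`. Both `φ₁` and `φ₂`
restrict to the identity on `s(x, y)`, while `φ₁ z = xy` and `φ₂ z = 0`: thus `φ₂` recovers
`s` mod `(x², y²)`, and `φ₁ - φ₂` recovers `c · xy`, which determines `c` because the monomial
`xy` is not divisible by `x²` or `y²`.
-/

open MvPolynomial

/-- The ideal `(x², y², z², xz, yz)` of `R[x,y,z]`, so that the quotient is the
function algebra `A` of the infinitesimal object `D³{(1,3),(2,3)}`. -/
noncomputable def idealA (R : Type*) [CommRing R] : Ideal (MvPolynomial (Fin 3) R) :=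
  Ideal.span {X 0 ^ 2, X 1 ^ 2, X 2 ^ 2, X 0 * X 2, X 1 * X 2}

/-- The ideal `(x², y²)` of `R[x,y]`, so that the quotient is the function algebra `B`
of the infinitesimal object `D²`. -/
noncomputable def idealB (R : Type*) [CommRing R] : Ideal (MvPolynomial (Fin 2) R) :=
  Ideal.span {X 0 ^ 2, X 1 ^ 2}

section

variable {R : Type*} [CommRing R]

local notation "𝔸" => MvPolynomial (Fin 3) R ⧸ idealA R
local notation "𝔹" => MvPolynomial (Fin 2) R ⧸ idealB R

lemma X_mul_X_two_mem_idealA (i : Fin 3) : (X i * X 2 : MvPolynomial (Fin 3) R) ∈ idealA R := by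
  fin_cases i <;> exact Ideal.subset_span (by simp [sq])

lemma map_rename_castSucc_idealB_le : (idealB R).map (rename Fin.castSucc) ≤ idealA R := by
  rw [idealB, Ideal.map_span, Ideal.span_le]
  rintro _ ⟨p, hp, rfl⟩
  rcases hp with rfl | rfl <;> exact Ideal.subset_span (by simp)

lemma eq_zero_of_C_mul_X_zero_mul_X_one_mem_idealB {c : R}
    (h : C c * (X 0 * X 1) ∈ idealB R) : c = 0 := by
  have hB : idealB R = Ideal.span ((fun s => monomial s (1 : R)) ''
      {Finsupp.single 0 2, Finsupp.single 1 2}) := by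
    simp [idealB, Set.image_pair, X_pow_eq_monomial]
  have hxy : (C c * (X 0 * X 1) : MvPolynomial (Fin 2) R) =
      monomial (Finsupp.single 0 1 + Finsupp.single 1 1) c := by
    rw [X, X, monomial_mul, C_mul_monomial, one_mul, mul_one]
  by_contra hc
  rw [hB, hxy, mem_ideal_span_monomial_image] at h
  obtain ⟨m, hm, hle⟩ := h (Finsupp.single 0 1 + Finsupp.single 1 1) (by simp [hc])
  rcases hm with rfl | rfl
  · simpa using hle 0
  · simpa using hle 1

lemma mk_rename_castSucc_mul_mk_X_two (s : MvPolynomial (Fin 2) R) :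
    Ideal.Quotient.mk (idealA R) (rename Fin.castSucc s) * Ideal.Quotient.mk (idealA R) (X 2) =
      constantCoeff s • Ideal.Quotient.mk (idealA R) (X 2) := by
  induction s using MvPolynomial.induction_on with
  | C a => rw [rename_C, constantCoeff_C]; exact (Algebra.smul_def (A := 𝔸) a _).symm
  | add p q hp hq => rw [map_add, map_add, add_mul, hp, hq, map_add, add_smul]
  | mul_X p j _ =>
    rw [map_mul, rename_X, map_mul, mul_assoc, ← map_mul,
      Ideal.Quotient.eq_zero_iff_mem.mpr (X_mul_X_two_mem_idealA _)]
    simp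

lemma exists_mk_eq_mk_rename_castSucc_add_smul (p : MvPolynomial (Fin 3) R) :
    ∃ (s : MvPolynomial (Fin 2) R) (c : R), Ideal.Quotient.mk (idealA R) p =
      Ideal.Quotient.mk (idealA R) (rename Fin.castSucc s) +
        c • Ideal.Quotient.mk (idealA R) (X 2) := by
  induction p using MvPolynomial.induction_on with
  | C a => exact ⟨C a, 0, by simp⟩
  | add p q hp hq =>
    obtain ⟨s, c, hp⟩ := hp
    obtain ⟨t, d, hq⟩ := hq
    exact ⟨s + t, c + d, by rw [map_add, hp, hq, map_add, map_add, add_smul]; abel⟩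
  | mul_X p i hp =>
    obtain ⟨s, c, hp⟩ := hp
    induction i using Fin.lastCases with
    | last =>
      refine ⟨0, constantCoeff s, ?_⟩
      change Ideal.Quotient.mk _ (p * X 2) = _
      rw [map_mul, hp, add_mul, mk_rename_castSucc_mul_mk_X_two, smul_mul_assoc, ← map_mul,
        Ideal.Quotient.eq_zero_iff_mem.mpr (X_mul_X_two_mem_idealA 2)]
      simp
    | cast j =>
      refine ⟨s * X j, 0, ?_⟩
      rw [map_mul, hp, add_mul, smul_mul_assoc, ← map_mul, ← map_mul, mul_comm (X 2),
        Ideal.Quotient.eq_zero_iff_mem.mpr (X_mul_X_two_mem_idealA _)]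
      simp

lemma apply_mk_rename_castSucc (φ : 𝔸 →ₐ[R] 𝔹)
    (hx : φ (Ideal.Quotient.mk (idealA R) (X 0)) = Ideal.Quotient.mk (idealB R) (X 0))
    (hy : φ (Ideal.Quotient.mk (idealA R) (X 1)) = Ideal.Quotient.mk (idealB R) (X 1))
    (s : MvPolynomial (Fin 2) R) :
    φ (Ideal.Quotient.mk (idealA R) (rename Fin.castSucc s)) = Ideal.Quotient.mk (idealB R) s := by
  have : (φ.comp (Ideal.Quotient.mkₐ R (idealA R))).comp (rename Fin.castSucc) =
      Ideal.Quotient.mkₐ R (idealB R) := by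
    ext i
    fin_cases i <;> simp [hx, hy]
  exact DFunLike.congr_fun this s

lemma eq_zero_of_map_eq_zero (φ₁ φ₂ : 𝔸 →ₐ[R] 𝔹)
    (h₁ : ∀ s, φ₁ (Ideal.Quotient.mk (idealA R) (rename Fin.castSucc s)) =
      Ideal.Quotient.mk (idealB R) s)
    (h₁z : φ₁ (Ideal.Quotient.mk (idealA R) (X 2)) = Ideal.Quotient.mk (idealB R) (X 0 * X 1))
    (h₂ : ∀ s, φ₂ (Ideal.Quotient.mk (idealA R) (rename Fin.castSucc s)) =
      Ideal.Quotient.mk (idealB R) s)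
    (h₂z : φ₂ (Ideal.Quotient.mk (idealA R) (X 2)) = 0)
    {a : 𝔸} (ha₁ : φ₁ a = 0) (ha₂ : φ₂ a = 0) : a = 0 := by
  obtain ⟨p, rfl⟩ := Ideal.Quotient.mk_surjective a
  obtain ⟨s, c, hp⟩ := exists_mk_eq_mk_rename_castSucc_add_smul p
  rw [hp] at ha₁ ha₂ ⊢
  simp only [map_add, map_smul, h₁, h₁z, h₂, h₂z, smul_zero, add_zero] at ha₁ ha₂
  rw [ha₂, zero_add] at ha₁
  have hc : C c * (X 0 * X 1) ∈ idealB R :=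
    Ideal.Quotient.eq_zero_iff_mem.mp (by rw [← smul_eq_C_mul]; exact ha₁)
  rw [eq_zero_of_C_mul_X_zero_mul_X_one_mem_idealB hc, zero_smul, add_zero,
    Ideal.Quotient.eq_zero_iff_mem]
  exact map_rename_castSucc_idealB_le
    (Ideal.mem_map_of_mem _ (Ideal.Quotient.eq_zero_iff_mem.mp ha₂))

end

/-- Let `B = R[x,y]/(x², y²)` and `A = R[x,y,z]/(x², y², z², xz, yz)`, and let
`φ₁, φ₂ : A → B` be the `R`-algebra homomorphisms determined by
`φ₁ : x ↦ x, y ↦ y, z ↦ xy` and `φ₂ : x ↦ x, y ↦ y, z ↦ 0`.  Then for any `b₁, b₂ ∈ B`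
with `b₁ - b₂` in the ideal generated by `xy`, there is a unique `a ∈ A` with
`φ₁ a = b₁` and `φ₂ a = b₂`. -/
theorem quasiColimit_strongDifference {R : Type*} [CommRing R]
    (φ₁ φ₂ : (MvPolynomial (Fin 3) R ⧸ idealA R) →ₐ[R] (MvPolynomial (Fin 2) R ⧸ idealB R))
    (h₁x : φ₁ (Ideal.Quotient.mk (idealA R) (X 0)) = Ideal.Quotient.mk (idealB R) (X 0))
    (h₁y : φ₁ (Ideal.Quotient.mk (idealA R) (X 1)) = Ideal.Quotient.mk (idealB R) (X 1))
    (h₁z : φ₁ (Ideal.Quotient.mk (idealA R) (X 2)) = Ideal.Quotient.mk (idealB R) (X 0 * X 1))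
    (h₂x : φ₂ (Ideal.Quotient.mk (idealA R) (X 0)) = Ideal.Quotient.mk (idealB R) (X 0))
    (h₂y : φ₂ (Ideal.Quotient.mk (idealA R) (X 1)) = Ideal.Quotient.mk (idealB R) (X 1))
    (h₂z : φ₂ (Ideal.Quotient.mk (idealA R) (X 2)) = 0)
    (b₁ b₂ : MvPolynomial (Fin 2) R ⧸ idealB R)
    (h : b₁ - b₂ ∈ Ideal.span {Ideal.Quotient.mk (idealB R) (X 0 * X 1)}) :
    ∃! a : MvPolynomial (Fin 3) R ⧸ idealA R, φ₁ a = b₁ ∧ φ₂ a = b₂ := by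
  have hφ₁ := apply_mk_rename_castSucc φ₁ h₁x h₁y
  have hφ₂ := apply_mk_rename_castSucc φ₂ h₂x h₂y
  refine existsUnique_of_exists_of_unique ?_ fun a a' ⟨ha₁, ha₂⟩ ⟨ha₁', ha₂'⟩ => ?_
  · obtain ⟨r, hr⟩ := Ideal.mem_span_singleton'.mp h
    obtain ⟨s, rfl⟩ := Ideal.Quotient.mk_surjective b₂
    obtain ⟨t, rfl⟩ := Ideal.Quotient.mk_surjective r
    refine ⟨Ideal.Quotient.mk (idealA R) (rename Fin.castSucc s + rename Fin.castSucc t * X 2),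
      ?_, ?_⟩
    · rw [map_add, map_mul, map_add, map_mul, hφ₁, hφ₁, h₁z, hr, add_sub_cancel]
    · rw [map_add, map_mul, map_add, map_mul, hφ₂, h₂z, mul_zero, add_zero]
  · refine sub_eq_zero.mp (eq_zero_of_map_eq_zero φ₁ φ₂ hφ₁ h₁z hφ₂ h₂z ?_ ?_)
    · rw [map_sub, ha₁, ha₁', sub_self]
    · rw [map_sub, ha₂, ha₂', sub_self]
end

section
/- Let R be a commutative ring and n a natural number. Let B = R[x₁,…,x_n,u,v]/(x₁²,…,x_n², u², v²) and A = R[x₁,…,x_n,u,v,w]/(x₁²,…,x_n², u², v², w², uw, vw). Let φ₁, φ₂ : A → B be the R-algebra homomorphisms fixing each xᵢ, u, v and sending w to uv and to 0 respectively (both well defined). Then for any b₁, b₂ ∈ B whose difference lies in the ideal of B generated by uv, there exists a unique a ∈ A with φ₁(a) = b₁ and φ₂(a) = b₂. -/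
open MvPolynomial

/-- The ideal `(x₁², …, x_n², u², v²)` of `R[x₁,…,x_n,u,v]` (with `u, v` the last two
variables), so that the quotient is the function algebra of `D^{n+2}`. -/
noncomputable def idealBrel (R : Type*) [CommRing R] (n : ℕ) :
    Ideal (MvPolynomial (Fin (n + 2)) R) :=
  Ideal.span (Set.range fun i : Fin (n + 2) => X i ^ 2)

/-- The ideal `(x₁², …, x_n², u², v², w², uw, vw)` of `R[x₁,…,x_n,u,v,w]` (with `u, v, w`
the last three variables), so that the quotient is the function algebra of
`D^{n+3}{(n+1,n+3),(n+2,n+3)}`. -/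
noncomputable def idealArel (R : Type*) [CommRing R] (n : ℕ) :
    Ideal (MvPolynomial (Fin (n + 3)) R) :=
  Ideal.span (Set.range (fun i : Fin (n + 3) => X i ^ 2) ∪
    {X (⟨n, by omega⟩ : Fin (n + 3)) * X (⟨n + 2, by omega⟩ : Fin (n + 3)),
     X (⟨n + 1, by omega⟩ : Fin (n + 3)) * X (⟨n + 2, by omega⟩ : Fin (n + 3))})

/-! Write `w` for the last variable of `A`. Renaming variables along `Fin.castSucc` induces
`s = renameCastSucc : B → A`, a section of both `φ₁` and `φ₂`, and since `w² = 0` every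
element of `A` is `s b₀ + s b₁ * w`. Its images are `φ₂ = b₀` and `φ₁ = b₀ + b₁ * uv`, which
gives existence. For uniqueness, `b₁ * uv = 0` in `B` forces `b₁` into `(u, v)` modulo the
squares of the variables (a monomial-ideal computation), and `u * w = v * w = 0` in `A` then
kills `s b₁ * w`. -/

namespace MvPolynomial

variable {σ R : Type*} [CommSemiring R]

theorem range_X_sq_union_image_X (V : Set σ) :
    Set.range (fun j => (X j : MvPolynomial σ R) ^ 2) ∪ X '' V =
      (fun s => monomial s (1 : R)) ''
        (Set.range (fun j => Finsupp.single j 2) ∪ (fun j => Finsupp.single j 1) '' V) := by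
  simp only [Set.image_union, ← Set.range_comp, Set.image_image, Function.comp_def,
    ← X_pow_eq_monomial, pow_one]

theorem mem_span_X_sq_union_insert_of_mul_X_mem {V : Set σ} {i : σ} {q : MvPolynomial σ R}
    (hi : i ∉ V)
    (h : q * X i ∈ Ideal.span (Set.range (fun j => (X j : MvPolynomial σ R) ^ 2) ∪ X '' V)) :
    q ∈ Ideal.span (Set.range (fun j => (X j : MvPolynomial σ R) ^ 2) ∪ X '' insert i V) := by
  rw [range_X_sq_union_image_X, mem_ideal_span_monomial_image] at h ⊢
  intro m hm
  obtain ⟨s, hs, hle⟩ := h (m + Finsupp.single i 1) (by simpa using hm)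
  rcases hs with ⟨j, rfl⟩ | ⟨v, hv, rfl⟩
  · rw [Finsupp.single_le_iff, Finsupp.add_apply] at hle
    by_cases hji : j = i
    · subst hji
      refine ⟨_, Or.inr ⟨j, Set.mem_insert _ _, rfl⟩, Finsupp.single_le_iff.2 ?_⟩
      simp only [Finsupp.single_eq_same] at hle
      omega
    · refine ⟨_, Or.inl ⟨j, rfl⟩, Finsupp.single_le_iff.2 ?_⟩
      simpa [Finsupp.single_apply, Ne.symm hji] using hle
  · have hvi : v ≠ i := ne_of_mem_of_not_mem hv hi
    refine ⟨_, Or.inr ⟨v, Set.mem_insert_of_mem _ hv, rfl⟩, Finsupp.single_le_iff.2 ?_⟩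
    simpa [Finsupp.single_le_iff, Finsupp.single_apply, Ne.symm hvi] using hle

theorem mem_span_X_sq_union_of_mul_X_mul_X_mem {u v : σ} {q : MvPolynomial σ R} (huv : u ≠ v)
    (h : q * (X u * X v) ∈ Ideal.span (Set.range (fun j => (X j : MvPolynomial σ R) ^ 2))) :
    q ∈ Ideal.span (Set.range (fun j => (X j : MvPolynomial σ R) ^ 2) ∪ X '' {u, v}) := by
  have hv : q * X u * X v ∈
      Ideal.span (Set.range (fun j => (X j : MvPolynomial σ R) ^ 2) ∪ X '' ∅) := by
    rwa [Set.image_empty, Set.union_empty, mul_assoc]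
  have hu := mem_span_X_sq_union_insert_of_mul_X_mem (Set.notMem_empty v) hv
  rw [insert_empty_eq] at hu
  exact mem_span_X_sq_union_insert_of_mul_X_mem (Set.notMem_singleton_iff.2 huv) hu

end MvPolynomial

section Relativized

variable {R : Type*} [CommRing R] {n : ℕ}

local notation "𝔸" => MvPolynomial (Fin (n + 3)) R ⧸ idealArel R n
local notation "𝔹" => MvPolynomial (Fin (n + 2)) R ⧸ idealBrel R n

theorem rename_castSucc_mem_idealArel {q : MvPolynomial (Fin (n + 2)) R}
    (hq : q ∈ idealBrel R n) : rename Fin.castSucc q ∈ idealArel R n := by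
  have : (idealBrel R n).map (rename Fin.castSucc) ≤ idealArel R n := by
    rw [idealBrel, Ideal.map_span, Ideal.span_le, ← Set.range_comp]
    rintro _ ⟨i, rfl⟩
    exact Ideal.subset_span (Or.inl ⟨i.castSucc, by simp⟩)
  exact this (Ideal.mem_map_of_mem _ hq)

theorem rename_castSucc_mul_X_last_mem_idealArel {q : MvPolynomial (Fin (n + 2)) R}
    (hq : q ∈ Ideal.span (Set.range (fun j => (X j : MvPolynomial (Fin (n + 2)) R) ^ 2) ∪
      X '' {(Fin.last n).castSucc, Fin.last (n + 1)})) :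
    rename Fin.castSucc q * X (Fin.last (n + 2)) ∈ idealArel R n := by
  have : (Ideal.span (Set.range (fun j => (X j : MvPolynomial (Fin (n + 2)) R) ^ 2) ∪
      X '' {(Fin.last n).castSucc, Fin.last (n + 1)})).map (rename Fin.castSucc) ≤
        (idealArel R n).colon {X (Fin.last (n + 2))} := by
    rw [Ideal.map_span, Ideal.span_le]
    rintro _ ⟨p, hp, rfl⟩
    rw [SetLike.mem_coe, Submodule.mem_colon_singleton, smul_eq_mul]
    rcases hp with ⟨i, rfl⟩ | ⟨j, rfl | rfl, rfl⟩
    · rw [map_pow, rename_X]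
      exact Ideal.mul_mem_right _ _ (Ideal.subset_span (Or.inl ⟨_, rfl⟩))
    · rw [rename_X]; exact Ideal.subset_span (Or.inr (Or.inl rfl))
    · rw [rename_X]; exact Ideal.subset_span (Or.inr (Or.inr rfl))
  simpa using this (Ideal.mem_map_of_mem _ hq)

theorem mk_X_sq_idealArel (i : Fin (n + 3)) :
    Ideal.Quotient.mk (idealArel R n) (X i) ^ 2 = 0 := by
  rw [← map_pow, Ideal.Quotient.eq_zero_iff_mem]
  exact Ideal.subset_span (Or.inl ⟨i, rfl⟩)

variable (R n) in
noncomputable def renameCastSucc : 𝔹 →ₐ[R] 𝔸 :=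
  Ideal.Quotient.liftₐ (idealBrel R n)
    ((Ideal.Quotient.mkₐ R (idealArel R n)).comp (rename Fin.castSucc))
    (fun _ hq => Ideal.Quotient.eq_zero_iff_mem.2 (rename_castSucc_mem_idealArel hq))

theorem renameCastSucc_mk (q : MvPolynomial (Fin (n + 2)) R) :
    renameCastSucc R n (Ideal.Quotient.mk (idealBrel R n) q) =
      Ideal.Quotient.mk (idealArel R n) (rename Fin.castSucc q) :=
  rfl

theorem apply_renameCastSucc {φ : 𝔸 →ₐ[R] 𝔹}
    (hφ : ∀ i : Fin (n + 2), φ (Ideal.Quotient.mk (idealArel R n) (X i.castSucc)) =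
      Ideal.Quotient.mk (idealBrel R n) (X i)) (b : 𝔹) :
    φ (renameCastSucc R n b) = b := by
  refine AlgHom.congr_fun (show φ.comp (renameCastSucc R n) = AlgHom.id R 𝔹 from ?_) b
  refine Ideal.Quotient.algHom_ext _ (MvPolynomial.algHom_ext fun i => ?_)
  simpa [renameCastSucc_mk] using hφ i

theorem map_renameCastSucc_add_mul {φ : 𝔸 →ₐ[R] 𝔹}
    (hφ : ∀ i : Fin (n + 2), φ (Ideal.Quotient.mk (idealArel R n) (X i.castSucc)) =
      Ideal.Quotient.mk (idealBrel R n) (X i)) (b₀ b₁ : 𝔹) (a : 𝔸) :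
    φ (renameCastSucc R n b₀ + renameCastSucc R n b₁ * a) = b₀ + b₁ * φ a := by
  rw [map_add, map_mul, apply_renameCastSucc hφ, apply_renameCastSucc hφ]

theorem exists_eq_renameCastSucc_add_mul_X_last (a : 𝔸) :
    ∃ b₀ b₁ : 𝔹, a = renameCastSucc R n b₀ +
      renameCastSucc R n b₁ * Ideal.Quotient.mk (idealArel R n) (X (Fin.last (n + 2))) := by
  obtain ⟨p, rfl⟩ := Ideal.Quotient.mk_surjective a
  induction p using MvPolynomial.induction_on with
  | C r => exact ⟨algebraMap R 𝔹 r, 0, by rw [map_zero, zero_mul, add_zero, AlgHom.commutes]; rfl⟩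
  | add p q hp hq =>
    obtain ⟨a₀, a₁, ha⟩ := hp
    obtain ⟨b₀, b₁, hb⟩ := hq
    exact ⟨a₀ + b₀, a₁ + b₁, by rw [map_add, ha, hb]; simp only [map_add]; ring⟩
  | mul_X p i hp =>
    obtain ⟨b₀, b₁, hb⟩ := hp
    induction i using Fin.lastCases with
    | last =>
      refine ⟨0, b₀, ?_⟩
      rw [map_mul, hb, map_zero, zero_add]
      linear_combination renameCastSucc R n b₁ * mk_X_sq_idealArel (R := R) (Fin.last (n + 2))
    | cast j =>
      refine ⟨b₀ * Ideal.Quotient.mk _ (X j), b₁ * Ideal.Quotient.mk _ (X j), ?_⟩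
      simp only [map_mul, hb, renameCastSucc_mk, rename_X]
      ring

theorem renameCastSucc_mul_X_last_eq_zero {b : 𝔹}
    (hb : b * Ideal.Quotient.mk (idealBrel R n)
      (X (Fin.last n).castSucc * X (Fin.last (n + 1))) = 0) :
    renameCastSucc R n b * Ideal.Quotient.mk (idealArel R n) (X (Fin.last (n + 2))) = 0 := by
  obtain ⟨q, rfl⟩ := Ideal.Quotient.mk_surjective b
  rw [← map_mul, Ideal.Quotient.eq_zero_iff_mem] at hb
  rw [renameCastSucc_mk, ← map_mul, Ideal.Quotient.eq_zero_iff_mem]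
  exact rename_castSucc_mul_X_last_mem_idealArel
    (mem_span_X_sq_union_of_mul_X_mul_X_mem (by simp [Fin.ext_iff]) hb)

theorem eq_of_map_eq {φ₁ φ₂ : 𝔸 →ₐ[R] 𝔹}
    (h₁ : ∀ i : Fin (n + 2), φ₁ (Ideal.Quotient.mk (idealArel R n) (X i.castSucc)) =
      Ideal.Quotient.mk (idealBrel R n) (X i))
    (h₂ : ∀ i : Fin (n + 2), φ₂ (Ideal.Quotient.mk (idealArel R n) (X i.castSucc)) =
      Ideal.Quotient.mk (idealBrel R n) (X i))
    (h₁w : φ₁ (Ideal.Quotient.mk (idealArel R n) (X (Fin.last (n + 2)))) =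
      Ideal.Quotient.mk (idealBrel R n)
        (X (Fin.last n).castSucc * X (Fin.last (n + 1))))
    (h₂w : φ₂ (Ideal.Quotient.mk (idealArel R n) (X (Fin.last (n + 2)))) = 0)
    {a a' : 𝔸} (ha₁ : φ₁ a = φ₁ a') (ha₂ : φ₂ a = φ₂ a') : a = a' := by
  rw [← sub_eq_zero] at ha₁ ha₂ ⊢
  rw [← map_sub] at ha₁ ha₂
  obtain ⟨b₀, b₁, hb⟩ := exists_eq_renameCastSucc_add_mul_X_last (a - a')
  rw [hb, map_renameCastSucc_add_mul h₁, h₁w] at ha₁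
  rw [hb, map_renameCastSucc_add_mul h₂, h₂w, mul_zero, add_zero] at ha₂
  rw [ha₂, zero_add] at ha₁
  rw [hb, ha₂, map_zero, zero_add, renameCastSucc_mul_X_last_eq_zero ha₁]

end Relativized

/-- Let `B = R[x₁,…,x_n,u,v]/(x₁²,…,x_n²,u²,v²)` and
`A = R[x₁,…,x_n,u,v,w]/(x₁²,…,x_n²,u²,v²,w²,uw,vw)`, and let `φ₁, φ₂ : A → B` be the
`R`-algebra homomorphisms fixing each `xᵢ, u, v` and sending `w` to `uv` and to `0`
respectively. Then for any `b₁, b₂ ∈ B` whose difference lies in the ideal generated by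
`uv`, there exists a unique `a ∈ A` with `φ₁ a = b₁` and `φ₂ a = b₂`. -/
theorem quasiColimit_relativized_strongDifference {R : Type*} [CommRing R] (n : ℕ)
    (φ₁ φ₂ : (MvPolynomial (Fin (n + 3)) R ⧸ idealArel R n) →ₐ[R]
      (MvPolynomial (Fin (n + 2)) R ⧸ idealBrel R n))
    (h₁ : ∀ i : Fin (n + 2), φ₁ (Ideal.Quotient.mk (idealArel R n) (X i.castSucc)) =
      Ideal.Quotient.mk (idealBrel R n) (X i))
    (h₂ : ∀ i : Fin (n + 2), φ₂ (Ideal.Quotient.mk (idealArel R n) (X i.castSucc)) =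
      Ideal.Quotient.mk (idealBrel R n) (X i))
    (h₁w : φ₁ (Ideal.Quotient.mk (idealArel R n) (X (Fin.last (n + 2)))) =
      Ideal.Quotient.mk (idealBrel R n)
        (X (⟨n, by omega⟩ : Fin (n + 2)) * X (⟨n + 1, by omega⟩ : Fin (n + 2))))
    (h₂w : φ₂ (Ideal.Quotient.mk (idealArel R n) (X (Fin.last (n + 2)))) = 0)
    (b₁ b₂ : MvPolynomial (Fin (n + 2)) R ⧸ idealBrel R n)
    (h : b₁ - b₂ ∈ Ideal.span {Ideal.Quotient.mk (idealBrel R n)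
      (X (⟨n, by omega⟩ : Fin (n + 2)) * X (⟨n + 1, by omega⟩ : Fin (n + 2)))}) :
    ∃! a : MvPolynomial (Fin (n + 3)) R ⧸ idealArel R n, φ₁ a = b₁ ∧ φ₂ a = b₂ := by
  obtain ⟨c, hc⟩ := Ideal.mem_span_singleton'.mp h
  set a₀ := renameCastSucc R n b₂ +
    renameCastSucc R n c * Ideal.Quotient.mk (idealArel R n) (X (Fin.last (n + 2)))
  have ha₀₁ : φ₁ a₀ = b₁ := by
    rw [map_renameCastSucc_add_mul h₁, h₁w, hc, add_sub_cancel]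
  have ha₀₂ : φ₂ a₀ = b₂ := by
    rw [map_renameCastSucc_add_mul h₂, h₂w, mul_zero, add_zero]
  exact ⟨a₀, ⟨ha₀₁, ha₀₂⟩, fun a ⟨ha₁, ha₂⟩ =>
    eq_of_map_eq h₁ h₂ h₁w h₂w (ha₁.trans ha₀₁.symm) (ha₂.trans ha₀₂.symm)⟩
end

section
/- Let R be a commutative ring and B = R[x,y]/(x², y²). Then the ideal of B generated by xy equals the intersection of the ideal generated by x with the ideal generated by y. Equivalently, for b₁, b₂ ∈ B, the difference b₁ − b₂ lies in the ideal (xy) if and only if it lies in the ideal (x) and in the ideal (y). -/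
/-!
Pulled back to `R[x,y]`, all three ideals are monomial ideals containing `x²` and `y²`, and a
polynomial lies in a monomial ideal iff every exponent of its support dominates a generator. The
claim thus reduces to exponents `d ∈ ℕ²`: `d` dominates one of `(1,1), (2,0), (0,2)` iff it
dominates one of `(1,0), (2,0), (0,2)` and one of `(0,1), (2,0), (0,2)`.
-/

open MvPolynomial

open Finsupp (single)

theorem Ideal.comap_mk_span_singleton_mk {A : Type*} [CommRing A] (I : Ideal A) (a : A) :
    (Ideal.span {Ideal.Quotient.mk I a}).comap (Ideal.Quotient.mk I) = Ideal.span {a} ⊔ I := by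
  rw [← Set.image_singleton, ← Ideal.map_span,
    Ideal.comap_map_of_surjective' _ Ideal.Quotient.mk_surjective, Ideal.mk_ker]

namespace MvPolynomial

variable {σ R : Type*} [CommSemiring R]

variable (R) in
noncomputable def monomialIdeal (S : Set (σ →₀ ℕ)) : Ideal (MvPolynomial σ R) :=
  Ideal.span ((fun s => monomial s 1) '' S)

theorem mem_monomialIdeal {S : Set (σ →₀ ℕ)} {p : MvPolynomial σ R} :
    p ∈ monomialIdeal R S ↔ ∀ d ∈ p.support, ∃ s ∈ S, s ≤ d :=
  mem_ideal_span_monomial_image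

theorem span_monomial_sup_monomialIdeal (e : σ →₀ ℕ) (S : Set (σ →₀ ℕ)) :
    Ideal.span {monomial e (1 : R)} ⊔ monomialIdeal R S = monomialIdeal R (insert e S) := by
  rw [monomialIdeal, monomialIdeal, Set.image_insert_eq, Ideal.span_insert]

theorem monomialIdeal_eq_inf {U S T : Set (σ →₀ ℕ)}
    (h : ∀ d, (∃ u ∈ U, u ≤ d) ↔ (∃ s ∈ S, s ≤ d) ∧ ∃ t ∈ T, t ≤ d) :
    monomialIdeal R U = monomialIdeal R S ⊓ monomialIdeal R T := by
  ext p
  simp only [Ideal.mem_inf, mem_monomialIdeal, h, forall₂_and]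

end MvPolynomial

section

variable {R : Type*} [CommRing R]

theorem idealB_eq_monomialIdeal :
    idealB R = monomialIdeal R {single 0 2, single 1 2} := by
  rw [idealB, monomialIdeal, Set.image_pair, X_pow_eq_monomial, X_pow_eq_monomial]

theorem X_zero_mul_X_one :
    (X 0 * X 1 : MvPolynomial (Fin 2) R) = monomial (single 0 1 + single 1 1) 1 := by
  rw [X, X, monomial_mul, one_mul]

end

theorem exists_le_xy_iff_exists_le_x_and_exists_le_y (d : Fin 2 →₀ ℕ) :
    (∃ u ∈ ({single 0 1 + single 1 1, single 0 2, single 1 2} : Set (Fin 2 →₀ ℕ)), u ≤ d) ↔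
      (∃ s ∈ ({single 0 1, single 0 2, single 1 2} : Set (Fin 2 →₀ ℕ)), s ≤ d) ∧
        ∃ t ∈ ({single 1 1, single 0 2, single 1 2} : Set (Fin 2 →₀ ℕ)), t ≤ d := by
  simp only [Set.mem_insert_iff, Set.mem_singleton_iff, exists_eq_or_imp, exists_eq_left,
    Finsupp.le_def, Fin.forall_fin_two, Finsupp.add_apply, Finsupp.single_apply, ↓reduceIte,
    Fin.isValue, one_ne_zero, zero_ne_one, add_zero, zero_add, zero_le, and_true, true_and]
  omega

/-- In `B = R[x,y]/(x², y²)`, the ideal generated by `xy` equals the intersection of the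
ideal generated by `x` with the ideal generated by `y`. -/
theorem span_xy_eq_span_x_inf_span_y (R : Type*) [CommRing R] :
    (Ideal.span {Ideal.Quotient.mk (idealB R) (X 0 * X 1)} :
        Ideal (MvPolynomial (Fin 2) R ⧸ idealB R)) =
      Ideal.span {Ideal.Quotient.mk (idealB R) (X 0)} ⊓
        Ideal.span {Ideal.Quotient.mk (idealB R) (X 1)} := by
  apply Ideal.comap_injective_of_surjective _ (Ideal.Quotient.mk_surjective (I := idealB R))
  rw [Ideal.comap_inf]
  simp only [Ideal.comap_mk_span_singleton_mk, idealB_eq_monomialIdeal, X_zero_mul_X_one]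
  simp only [X, span_monomial_sup_monomialIdeal]
  exact monomialIdeal_eq_inf exists_le_xy_iff_exists_le_x_and_exists_le_y
end

section
/- Let R be a commutative ring, V a finite set, and W(V) the quotient of the polynomial ring over R in variables (x_v)_{v∈V} by the ideal generated by all x_v². Let A and B be disjoint subsets of V, let I be the ideal of W(V) generated by {x_a·x_b : a ∈ A, b ∈ B}, and for a subset T ⊆ V let κ_T : W(V) → W(V∖T) be the R-algebra map sending x_v to 0 for v ∈ T and fixing the other variables. Then for any u ∈ W(V∖A) and v ∈ W(V∖B) whose images in W(V∖(A∪B)) (killing the remaining block of variables) coincide, there exists a w ∈ W(V) with κ_A(w) = u and κ_B(w) = v, and w is unique modulo the ideal I; equivalently, W(V)/I is the fiber product of W(V∖A) and W(V∖B) over W(V∖(A∪B)). -/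
/-!
Existence: with `ι` the renaming maps along the subtype inclusions, `w = ι u + ι v - ι (ρ_A u)`
works, because `κ_A ∘ ι_{V∖B} = κ_A ∘ ι_{V∖(A∪B)} ∘ ρ_B` (and symmetrically), so the last two
terms cancel under `κ_A` by `ρ_A u = ρ_B v`.

Uniqueness: `e_A = ι ∘ κ_A` is an algebra endomorphism of `W(V)` with `w - e_A w ∈ (x_a : a ∈ A)`
for every `w`, and it fixes every `x_b` with `b ∈ B` since `A` and `B` are disjoint. Hence
`t - e_A t ∈ (x_a) * (x_b)` for every `t ∈ (x_b)`. An element `w` killed by `κ_A` and `κ_B`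
lies in `(x_b)` and has `e_A w = 0`, so `w ∈ (x_a) * (x_b) = I`.
-/

open MvPolynomial

/-- The ideal of `R[(x_v)_{v ∈ V}]` generated by all the squares `x_v²`: the quotient by it
is the Weil algebra `W(V)`, the function algebra of the infinitesimal object `D^V`. -/
noncomputable def sqIdeal (R : Type*) [CommRing R] (V : Type*) : Ideal (MvPolynomial V R) :=
  Ideal.span (Set.range fun v : V => X v ^ 2)

/-- The Weil algebra `W(V) = R[(x_v)_{v ∈ V}]/(x_v² : v ∈ V)`. -/
abbrev Weil (R : Type*) [CommRing R] (V : Type*) : Type _ :=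
  MvPolynomial V R ⧸ sqIdeal R V

theorem sqIdeal_le_comap_rename {R : Type*} [CommRing R] {σ τ : Type*} (f : σ → τ) :
    sqIdeal R σ ≤ (sqIdeal R τ).comap (rename f) :=
  Ideal.span_le.mpr <| by
    rintro _ ⟨v, rfl⟩
    exact Ideal.subset_span ⟨f v, by simp⟩

theorem sub_map_mem_mul_span {S : Type*} [CommRing S] (φ : S →+* S) {J : Ideal S}
    (hJ : ∀ s, s - φ s ∈ J) {T : Set S} (hT : ∀ t ∈ T, φ t = t) {t : S}
    (ht : t ∈ Ideal.span T) : t - φ t ∈ J * Ideal.span T := by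
  induction ht using Submodule.span_induction with
  | mem t ht => simp [hT t ht]
  | zero => simp
  | add x y _ _ hx hy => simpa [add_sub_add_comm] using add_mem hx hy
  | smul c x hx ih =>
    have : c * x - φ (c * x) = (c - φ c) * x + φ c * (x - φ x) := by rw [map_mul]; ring
    rw [smul_eq_mul, this]
    exact add_mem (Ideal.mul_mem_mul (hJ c) hx) (Ideal.mul_mem_left _ _ ih)

namespace Weil

variable (R : Type*) [CommRing R]

noncomputable abbrev X {σ : Type*} (v : σ) : Weil R σ :=
  Ideal.Quotient.mk (sqIdeal R σ) (MvPolynomial.X v)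

variable {R}

theorem algHom_ext {σ S : Type*} [Semiring S] [Algebra R S] {f g : Weil R σ →ₐ[R] S}
    (h : ∀ v, f (X R v) = g (X R v)) : f = g :=
  Ideal.Quotient.algHom_ext _ (MvPolynomial.algHom_ext h)

variable (R) in
noncomputable def rename {σ τ : Type*} (f : σ → τ) : Weil R σ →ₐ[R] Weil R τ :=
  Ideal.quotientMapₐ _ (MvPolynomial.rename f) (sqIdeal_le_comap_rename f)

@[simp]
theorem rename_X {σ τ : Type*} (f : σ → τ) (v : σ) : rename R f (X R v) = X R (f v) := by
  rw [rename, X, Ideal.quotient_map_mkₐ, MvPolynomial.rename_X]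
  rfl

theorem sub_mem_of_forall_X_sub_mem {σ : Type*} (φ : Weil R σ →ₐ[R] Weil R σ)
    {J : Ideal (Weil R σ)} (h : ∀ v, X R v - φ (X R v) ∈ J) (s : Weil R σ) :
    s - φ s ∈ J := by
  have : Ideal.Quotient.mkₐ R J = (Ideal.Quotient.mkₐ R J).comp φ :=
    algHom_ext fun v => Ideal.Quotient.eq.mpr (h v)
  exact Ideal.Quotient.eq.mp (DFunLike.congr_fun this s)

section Subsets

variable {V : Type*} {A B C : Set V}

theorem apply_rename_val_eq_self {κ : Weil R V →ₐ[R] Weil R {v : V // v ∉ A}}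
    (hκ : ∀ (v : V) (hv : v ∉ A), κ (X R v) = X R ⟨v, hv⟩) (u : Weil R {v : V // v ∉ A}) :
    κ (rename R Subtype.val u) = u := by
  have : κ.comp (rename R Subtype.val) = AlgHom.id R _ :=
    algHom_ext fun t => by simpa using hκ t.1 t.2
  exact DFunLike.congr_fun this u

theorem apply_rename_val_eq_apply_rename_val_apply
    {κ : Weil R V →ₐ[R] Weil R {v : V // v ∉ A}} (hκ₀ : ∀ v ∈ A, κ (X R v) = 0)
    {ρ : Weil R {v : V // v ∉ B} →ₐ[R] Weil R {v : V // v ∉ C}}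
    (hρ₀ : ∀ (v : V) (hv : v ∉ B), v ∈ A → ρ (X R ⟨v, hv⟩) = 0)
    (hρ₁ : ∀ (v : V) (hv : v ∉ B) (hv' : v ∉ C), ρ (X R ⟨v, hv⟩) = X R ⟨v, hv'⟩)
    (hC : C ⊆ A ∪ B) (u : Weil R {v : V // v ∉ B}) :
    κ (rename R Subtype.val u) = κ (rename R Subtype.val (ρ u)) := by
  have : κ.comp (rename R Subtype.val) = (κ.comp (rename R Subtype.val)).comp ρ := by
    refine algHom_ext fun ⟨t, htB⟩ => ?_
    by_cases htA : t ∈ A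
    · simp [hκ₀ t htA, hρ₀ t htB htA]
    · have htC : t ∉ C := fun h => (hC h).elim htA htB
      simp [hρ₁ t htB htC]
  exact DFunLike.congr_fun this u

theorem sub_rename_val_apply_mem_span {κ : Weil R V →ₐ[R] Weil R {v : V // v ∉ A}}
    (hκ₀ : ∀ v ∈ A, κ (X R v) = 0) (hκ₁ : ∀ (v : V) (hv : v ∉ A), κ (X R v) = X R ⟨v, hv⟩)
    (w : Weil R V) : w - rename R Subtype.val (κ w) ∈ Ideal.span (X R '' A) := by
  refine sub_mem_of_forall_X_sub_mem ((rename R Subtype.val).comp κ) (fun v => ?_) w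
  by_cases hv : v ∈ A
  · simpa [hκ₀ v hv] using Ideal.subset_span (Set.mem_image_of_mem _ hv)
  · simp [hκ₁ v hv]

theorem mem_span_mul_span_of_apply_eq_zero (hAB : Disjoint A B)
    {κA : Weil R V →ₐ[R] Weil R {v : V // v ∉ A}}
    (hκA₀ : ∀ v ∈ A, κA (X R v) = 0) (hκA₁ : ∀ (v : V) (hv : v ∉ A), κA (X R v) = X R ⟨v, hv⟩)
    {κB : Weil R V →ₐ[R] Weil R {v : V // v ∉ B}}
    (hκB₀ : ∀ v ∈ B, κB (X R v) = 0) (hκB₁ : ∀ (v : V) (hv : v ∉ B), κB (X R v) = X R ⟨v, hv⟩)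
    {w : Weil R V} (hwA : κA w = 0) (hwB : κB w = 0) :
    w ∈ Ideal.span (X R '' A) * Ideal.span (X R '' B) := by
  have hw : w ∈ Ideal.span (X R '' B) := by
    simpa [hwB] using sub_rename_val_apply_mem_span hκB₀ hκB₁ w
  have hfix : ∀ t ∈ X R '' B, rename R Subtype.val (κA t) = t := by
    rintro _ ⟨b, hb, rfl⟩
    simp [hκA₁ b (hAB.notMem_of_mem_right hb)]
  simpa [hwA] using sub_map_mem_mul_span ((rename R Subtype.val).comp κA).toRingHom
    (sub_rename_val_apply_mem_span hκA₀ hκA₁) hfix hw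

theorem span_image_X_mul_span_image_X (A B : Set V) :
    Ideal.span (X R '' A) * Ideal.span (X R '' B) =
      Ideal.span ((fun p : V × V =>
        Ideal.Quotient.mk (sqIdeal R V) (MvPolynomial.X p.1 * MvPolynomial.X p.2)) '' A ×ˢ B) := by
  rw [Ideal.span_mul_span', ← Set.image_mul_prod, Set.prod_image_image_eq, Set.image_image]
  simp

end Subsets

end Weil

theorem weil_fiberProduct_general {R : Type*} [CommRing R] {V : Type*}
    (A B : Set V) (hAB : Disjoint A B)
    (κA : Weil R V →ₐ[R] Weil R {v : V // v ∉ A})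
    (hκA₀ : ∀ v : V, v ∈ A → κA (Ideal.Quotient.mk (sqIdeal R V) (X v)) = 0)
    (hκA₁ : ∀ (v : V) (hv : v ∉ A), κA (Ideal.Quotient.mk (sqIdeal R V) (X v)) =
      Ideal.Quotient.mk (sqIdeal R {v : V // v ∉ A}) (X ⟨v, hv⟩))
    (κB : Weil R V →ₐ[R] Weil R {v : V // v ∉ B})
    (hκB₀ : ∀ v : V, v ∈ B → κB (Ideal.Quotient.mk (sqIdeal R V) (X v)) = 0)
    (hκB₁ : ∀ (v : V) (hv : v ∉ B), κB (Ideal.Quotient.mk (sqIdeal R V) (X v)) =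
      Ideal.Quotient.mk (sqIdeal R {v : V // v ∉ B}) (X ⟨v, hv⟩))
    (ρA : Weil R {v : V // v ∉ A} →ₐ[R] Weil R {v : V // v ∉ A ∪ B})
    (hρA₀ : ∀ (v : V) (hv : v ∉ A), v ∈ B →
      ρA (Ideal.Quotient.mk (sqIdeal R {v : V // v ∉ A}) (X ⟨v, hv⟩)) = 0)
    (hρA₁ : ∀ (v : V) (hv : v ∉ A) (hv' : v ∉ A ∪ B),
      ρA (Ideal.Quotient.mk (sqIdeal R {v : V // v ∉ A}) (X ⟨v, hv⟩)) =
        Ideal.Quotient.mk (sqIdeal R {v : V // v ∉ A ∪ B}) (X ⟨v, hv'⟩))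
    (ρB : Weil R {v : V // v ∉ B} →ₐ[R] Weil R {v : V // v ∉ A ∪ B})
    (hρB₀ : ∀ (v : V) (hv : v ∉ B), v ∈ A →
      ρB (Ideal.Quotient.mk (sqIdeal R {v : V // v ∉ B}) (X ⟨v, hv⟩)) = 0)
    (hρB₁ : ∀ (v : V) (hv : v ∉ B) (hv' : v ∉ A ∪ B),
      ρB (Ideal.Quotient.mk (sqIdeal R {v : V // v ∉ B}) (X ⟨v, hv⟩)) =
        Ideal.Quotient.mk (sqIdeal R {v : V // v ∉ A ∪ B}) (X ⟨v, hv'⟩))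
    (u : Weil R {v : V // v ∉ A}) (v : Weil R {v : V // v ∉ B}) (huv : ρA u = ρB v) :
    ∃ w : Weil R V, (κA w = u ∧ κB w = v) ∧
      ∀ w' : Weil R V, κA w' = u → κB w' = v →
        w' - w ∈ Ideal.span ((fun p : V × V =>
          Ideal.Quotient.mk (sqIdeal R V) (X p.1 * X p.2)) '' (A ×ˢ B)) := by
  obtain ⟨w, hwA, hwB⟩ : ∃ w : Weil R V, κA w = u ∧ κB w = v := by
    refine ⟨Weil.rename R Subtype.val u + Weil.rename R Subtype.val v -
      Weil.rename R (Subtype.val : {v : V // v ∉ A ∪ B} → V) (ρA u), ?_, ?_⟩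
    · rw [map_sub, map_add, Weil.apply_rename_val_eq_self hκA₁,
        Weil.apply_rename_val_eq_apply_rename_val_apply hκA₀ hρB₀ hρB₁ subset_rfl v, ← huv,
        add_sub_cancel_right]
    · rw [map_sub, map_add, Weil.apply_rename_val_eq_self hκB₁,
        Weil.apply_rename_val_eq_apply_rename_val_apply hκB₀ hρA₀ hρA₁ (Set.union_comm A B).le u,
        add_sub_cancel_left]
  refine ⟨w, ⟨hwA, hwB⟩, fun w' hw'A hw'B => ?_⟩
  rw [← Weil.span_image_X_mul_span_image_X]
  exact Weil.mem_span_mul_span_of_apply_eq_zero hAB hκA₀ hκA₁ hκB₀ hκB₁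
    (by rw [map_sub, hw'A, hwA, sub_self]) (by rw [map_sub, hw'B, hwB, sub_self])

/-- Let `A, B` be disjoint subsets of the finite set `V`, let `I` be the ideal of `W(V)`
generated by the products `x_a·x_b` (`a ∈ A`, `b ∈ B`), and let
`κ_A : W(V) → W(V∖A)`, `κ_B : W(V) → W(V∖B)`, `ρ_A : W(V∖A) → W(V∖(A∪B))`,
`ρ_B : W(V∖B) → W(V∖(A∪B))` be the `R`-algebra maps killing the indicated blocks of
variables and fixing the others. Then for any `u ∈ W(V∖A)` and `v ∈ W(V∖B)` with
`ρ_A u = ρ_B v`, there exists `w ∈ W(V)` with `κ_A w = u` and `κ_B w = v`, and `w` is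
unique modulo the ideal `I`. -/
theorem weil_fiberProduct {R : Type*} [CommRing R] {V : Type*} [Fintype V]
    (A B : Set V) (hAB : Disjoint A B)
    (κA : Weil R V →ₐ[R] Weil R {v : V // v ∉ A})
    (hκA₀ : ∀ v : V, v ∈ A → κA (Ideal.Quotient.mk (sqIdeal R V) (X v)) = 0)
    (hκA₁ : ∀ (v : V) (hv : v ∉ A), κA (Ideal.Quotient.mk (sqIdeal R V) (X v)) =
      Ideal.Quotient.mk (sqIdeal R {v : V // v ∉ A}) (X ⟨v, hv⟩))
    (κB : Weil R V →ₐ[R] Weil R {v : V // v ∉ B})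
    (hκB₀ : ∀ v : V, v ∈ B → κB (Ideal.Quotient.mk (sqIdeal R V) (X v)) = 0)
    (hκB₁ : ∀ (v : V) (hv : v ∉ B), κB (Ideal.Quotient.mk (sqIdeal R V) (X v)) =
      Ideal.Quotient.mk (sqIdeal R {v : V // v ∉ B}) (X ⟨v, hv⟩))
    (ρA : Weil R {v : V // v ∉ A} →ₐ[R] Weil R {v : V // v ∉ A ∪ B})
    (hρA₀ : ∀ (v : V) (hv : v ∉ A), v ∈ B →
      ρA (Ideal.Quotient.mk (sqIdeal R {v : V // v ∉ A}) (X ⟨v, hv⟩)) = 0)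
    (hρA₁ : ∀ (v : V) (hv : v ∉ A) (hv' : v ∉ A ∪ B),
      ρA (Ideal.Quotient.mk (sqIdeal R {v : V // v ∉ A}) (X ⟨v, hv⟩)) =
        Ideal.Quotient.mk (sqIdeal R {v : V // v ∉ A ∪ B}) (X ⟨v, hv'⟩))
    (ρB : Weil R {v : V // v ∉ B} →ₐ[R] Weil R {v : V // v ∉ A ∪ B})
    (hρB₀ : ∀ (v : V) (hv : v ∉ B), v ∈ A →
      ρB (Ideal.Quotient.mk (sqIdeal R {v : V // v ∉ B}) (X ⟨v, hv⟩)) = 0)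
    (hρB₁ : ∀ (v : V) (hv : v ∉ B) (hv' : v ∉ A ∪ B),
      ρB (Ideal.Quotient.mk (sqIdeal R {v : V // v ∉ B}) (X ⟨v, hv⟩)) =
        Ideal.Quotient.mk (sqIdeal R {v : V // v ∉ A ∪ B}) (X ⟨v, hv'⟩))
    (u : Weil R {v : V // v ∉ A}) (v : Weil R {v : V // v ∉ B}) (huv : ρA u = ρB v) :
    ∃ w : Weil R V, (κA w = u ∧ κB w = v) ∧
      ∀ w' : Weil R V, κA w' = u → κB w' = v →
        w' - w ∈ Ideal.span ((fun p : V × V =>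
          Ideal.Quotient.mk (sqIdeal R V) (X p.1 * X p.2)) '' (A ×ˢ B)) :=
  weil_fiberProduct_general A B hAB κA hκA₀ hκA₁ κB hκB₀ hκB₁ ρA hρA₀ hρA₁ ρB hρB₀ hρB₁ u v huv
end

section
/- Let R be a commutative ring and let W = R[x₁,x₂,x₃,x₄]/(x₁²,x₂²,x₃²,x₄²). For each permutation σ of {1,2,3,4} let θ^σ ∈ W, with coefficient family (a_S^σ)_{S⊆{1,2,3,4}} defined by θ^σ = Σ_S a_S^σ ∏_{i∈S} x_i. Then the following are equivalent: (i) for every permutation σ, every position k ∈ {1,2,3}, with i = σ(k), j = σ(k+1), and τ the permutation obtained from σ by interchanging the adjacent entries in positions k and k+1 of the word σ(1)σ(2)σ(3)σ(4), the difference θ^σ − θ^τ lies in the ideal of W generated by x_i·x_j; (ii) for every subset S ⊆ {1,2,3,4} and all permutations σ, τ that induce the same relative order on S (i.e., for all i, i' ∈ S, σ⁻¹(i) < σ⁻¹(i') if and only if τ⁻¹(i) < τ⁻¹(i')), one has a_S^σ = a_S^τ. -/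
open MvPolynomial

/-!
Modulo the squares, a polynomial lies in the ideal generated by `x_i x_j` exactly when each
squarefree monomial in its support contains both `x_i` and `x_j`. Hence (i) says that
`a_S^σ = a_S^τ` whenever `τ` arises from `σ` by interchanging two adjacent letters that are not
both in `S`. Such an interchange preserves the relative order on `S`. Conversely, if `σ ≠ τ`
induce the same order on `S`, then some adjacent pair of letters of `σ` is out of `τ`-order; it
cannot lie inside `S`, and interchanging it removes one of the pairs of letters that `σ` and `τ`
order differently, so induction on the number of such pairs connects `σ` to `τ`.
-/

/-- The ideal `(x₁², x₂², x₃², x₄²)` of `R[x₁,x₂,x₃,x₄]` (variables indexed by `Fin 4`):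
the quotient by it is the Weil algebra `W`, the function algebra of `D⁴`. -/
noncomputable def sqIdeal4 (R : Type*) [CommRing R] : Ideal (MvPolynomial (Fin 4) R) :=
  Ideal.span (Set.range fun v : Fin 4 => X v ^ 2)

namespace Finsupp

variable {ι : Type*}

theorem indicator_one_injective :
    Function.Injective fun S : Finset ι => indicator S fun _ _ => (1 : ℕ) := by
  classical
  intro S T h
  ext v
  have hv := DFunLike.congr_fun h v
  simp only [indicator_apply] at hv
  split_ifs at hv <;> simp_all

theorem single_add_single_le_indicator_one_iff [DecidableEq ι] {i j : ι} (hij : i ≠ j)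
    (S : Finset ι) :
    single i 1 + single j 1 ≤ indicator S (fun _ _ => 1) ↔ i ∈ S ∧ j ∈ S := by
  constructor
  · intro h
    have hi := h i
    have hj := h j
    simp only [add_apply, single_apply, indicator_apply, hij, hij.symm] at hi hj
    constructor
    · by_contra hS; simp [hS] at hi
    · by_contra hS; simp [hS] at hj
  · rintro ⟨hi, hj⟩ v
    simp only [add_apply, single_apply, indicator_apply]
    split_ifs <;> simp_all

theorem not_single_two_le_indicator_one (v : ι) (S : Finset ι) :
    ¬single v 2 ≤ indicator S (fun _ _ => 1) := by
  classical
  intro h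
  have hv := h v
  simp only [single_eq_same, indicator_apply] at hv
  split_ifs at hv <;> omega

theorem exists_mem_le_indicator_one_iff [DecidableEq ι] {i j : ι} (hij : i ≠ j) (S : Finset ι) :
    (∃ g ∈ ({single i 1 + single j 1} ∪ Set.range fun v => single v 2 : Set (ι →₀ ℕ)),
      g ≤ indicator S fun _ _ => 1) ↔ i ∈ S ∧ j ∈ S := by
  simp only [Set.singleton_union, Set.mem_insert_iff, Set.mem_range, exists_eq_or_imp,
    exists_exists_eq_and, not_single_two_le_indicator_one, exists_false, or_false,
    single_add_single_le_indicator_one_iff hij]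

end Finsupp

namespace MvPolynomial

variable {ι R : Type*}

section CommSemiring

variable [CommSemiring R]

theorem prod_X_eq_monomial_indicator (S : Finset ι) :
    ∏ v ∈ S, (X v : MvPolynomial ι R) = monomial (Finsupp.indicator S fun _ _ => 1) 1 := by
  simpa using prod_X_pow (R := R) (fun _ => 1) S

theorem sum_monomial_mem_span_monomial_iff {κ : Type*} [Fintype κ] {f : κ → ι →₀ ℕ}
    (hf : Function.Injective f) (c : κ → R) (G : Set (ι →₀ ℕ)) :
    ∑ t, monomial (f t) (c t) ∈ Ideal.span ((fun g => monomial g 1) '' G) ↔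
      ∀ t, c t ≠ 0 → ∃ g ∈ G, g ≤ f t := by
  classical
  have hcoeff : ∀ m, coeff m (∑ t, monomial (f t) (c t)) = ∑ t, if f t = m then c t else 0 :=
    fun m => by simp only [coeff_sum, coeff_monomial]
  rw [mem_ideal_span_monomial_image]
  constructor
  · intro h t ht
    refine h (f t) (mem_support_iff.2 ?_)
    rwa [hcoeff, Finset.sum_eq_single t (fun s _ hs => if_neg (hf.ne hs)) (by simp), if_pos rfl]
  · intro h m hm
    rw [mem_support_iff, hcoeff] at hm
    obtain ⟨t, -, ht⟩ := Finset.exists_ne_zero_of_sum_ne_zero hm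
    rw [ite_ne_right_iff] at ht
    exact ht.1 ▸ h t ht.2

end CommSemiring

theorem mk_sum_C_mul_prod_X_mem_span_iff [CommRing R] [Fintype ι] [DecidableEq ι]
    {i j : ι} (hij : i ≠ j) (c : Finset ι → R) :
    Ideal.Quotient.mk (Ideal.span (Set.range fun v : ι => (X v : MvPolynomial ι R) ^ 2))
        (∑ S, C (c S) * ∏ v ∈ S, X v) ∈
      Ideal.span {Ideal.Quotient.mk (Ideal.span (Set.range fun v : ι => X v ^ 2)) (X i * X j)} ↔
      ∀ S, ¬(i ∈ S ∧ j ∈ S) → c S = 0 := by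
  have hgen : ({X i * X j} ∪ Set.range fun v : ι => (X v : MvPolynomial ι R) ^ 2) =
      (fun g => monomial g 1) ''
        ({Finsupp.single i 1 + Finsupp.single j 1} ∪ Set.range fun v => Finsupp.single v 2) := by
    simp only [Set.image_union, Set.image_singleton, ← Set.range_comp, Function.comp_def, X,
      monomial_mul, monomial_pow, one_pow, Finsupp.smul_single, smul_eq_mul, mul_one]
  rw [← Set.image_singleton, ← Ideal.map_span, Ideal.mem_quotient_iff_mem_sup,
    ← Ideal.span_union, hgen]
  simp only [prod_X_eq_monomial_indicator, C_mul_monomial, mul_one]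
  rw [sum_monomial_mem_span_monomial_iff Finsupp.indicator_one_injective]
  simp only [Finsupp.exists_mem_le_indicator_one_iff hij]
  exact forall_congr' fun _ => not_imp_comm

end MvPolynomial

namespace Equiv.Perm

section LinearOrder

variable {α : Type*} [LinearOrder α]

def SameOrderOn (S : Finset α) (σ τ : Perm α) : Prop :=
  ∀ i ∈ S, ∀ i' ∈ S, (σ⁻¹ i < σ⁻¹ i' ↔ τ⁻¹ i < τ⁻¹ i')

theorem SameOrderOn.symm {S : Finset α} {σ τ : Perm α} (h : SameOrderOn S σ τ) :
    SameOrderOn S τ σ :=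
  fun i hi i' hi' => (h i hi i' hi').symm

theorem SameOrderOn.trans {S : Finset α} {σ τ ρ : Perm α} (h : SameOrderOn S σ τ)
    (h' : SameOrderOn S τ ρ) : SameOrderOn S σ ρ :=
  fun i hi i' hi' => (h i hi i' hi').trans (h' i hi i' hi')

def disagreements [Fintype α] (σ τ : Perm α) : Finset (α × α) :=
  {p | σ⁻¹ p.1 < σ⁻¹ p.2 ∧ τ⁻¹ p.2 < τ⁻¹ p.1}

end LinearOrder

theorem mul_swap_inv_apply {α : Type*} [DecidableEq α] (σ : Perm α) (a b x : α) :
    (σ * swap a b)⁻¹ x = swap a b (σ⁻¹ x) := by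
  rw [mul_inv_rev, swap_inv, mul_apply]

variable {m : ℕ}

theorem swap_castSucc_succ_lt_swap_iff {k : Fin m} {p q : Fin (m + 1)}
    (hpq : ¬(p = k.castSucc ∧ q = k.succ)) (hqp : ¬(q = k.castSucc ∧ p = k.succ)) :
    swap k.castSucc k.succ p < swap k.castSucc k.succ q ↔ p < q := by
  simp only [swap_apply_def, Fin.ext_iff, Fin.val_castSucc, Fin.val_succ] at *
  split_ifs <;> simp only [Fin.lt_def, Fin.val_castSucc, Fin.val_succ] <;> omega

theorem sameOrderOn_mul_swap {S : Finset (Fin (m + 1))} {σ : Perm (Fin (m + 1))} {k : Fin m}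
    (hS : ¬(σ k.castSucc ∈ S ∧ σ k.succ ∈ S)) :
    SameOrderOn S σ (σ * swap k.castSucc k.succ) := by
  have hpos : ∀ i ∈ S, ∀ i' ∈ S, ¬(σ⁻¹ i = k.castSucc ∧ σ⁻¹ i' = k.succ) := by
    rintro i hi i' hi' ⟨h, h'⟩
    rw [inv_eq_iff_eq] at h h'
    exact hS ⟨h ▸ hi, h' ▸ hi'⟩
  intro i hi i' hi'
  rw [mul_swap_inv_apply, mul_swap_inv_apply,
    swap_castSucc_succ_lt_swap_iff (hpos i hi i' hi') (hpos i' hi' i hi)]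

theorem exists_succ_lt_castSucc_of_ne_one {f : Perm (Fin (m + 1))} (hf : f ≠ 1) :
    ∃ k : Fin m, f k.succ < f k.castSucc := by
  by_contra! h
  have hmono : StrictMono f := Fin.strictMono_iff_lt_succ.2 fun k =>
    (h k).lt_of_ne (f.injective.ne Fin.castSucc_lt_succ.ne)
  exact hf (Perm.ext fun x => hmono.apply_eq)

theorem disagreements_mul_swap_ssubset {σ τ : Perm (Fin (m + 1))} {k : Fin m}
    (hk : τ⁻¹ (σ k.succ) < τ⁻¹ (σ k.castSucc)) :
    disagreements (σ * swap k.castSucc k.succ) τ ⊂ disagreements σ τ := by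
  have hsub : disagreements (σ * swap k.castSucc k.succ) τ ⊆ disagreements σ τ := by
    rintro ⟨x, y⟩
    simp only [disagreements, Finset.mem_filter, Finset.mem_univ, true_and, mul_swap_inv_apply]
    rintro ⟨hσ', hτ⟩
    refine ⟨?_, hτ⟩
    rwa [swap_castSucc_succ_lt_swap_iff] at hσ'
    · rintro ⟨hx, hy⟩
      rw [hx, hy, swap_apply_left, swap_apply_right] at hσ'
      exact absurd hσ' (Fin.castSucc_lt_succ).not_gt
    · rintro ⟨hy, hx⟩
      rw [inv_eq_iff_eq] at hx hy
      rw [hx, hy] at hτ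
      exact absurd hk hτ.not_gt
  have hσ : ∀ x, σ⁻¹ (σ x) = x := fun x => inv_eq_iff_eq.2 rfl
  refine (Finset.ssubset_iff_of_subset hsub).2 ⟨(σ k.castSucc, σ k.succ), ?_, ?_⟩
  · simp only [disagreements, Finset.mem_filter, Finset.mem_univ, true_and, hσ]
    exact ⟨Fin.castSucc_lt_succ, hk⟩
  · simp only [disagreements, Finset.mem_filter, Finset.mem_univ, true_and, mul_swap_inv_apply,
      hσ, swap_apply_left, swap_apply_right]
    exact fun h => Fin.castSucc_lt_succ.not_gt h.1

theorem eq_of_sameOrderOn {β : Type*} {S : Finset (Fin (m + 1))} {f : Perm (Fin (m + 1)) → β}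
    (hf : ∀ σ (k : Fin m), ¬(σ k.castSucc ∈ S ∧ σ k.succ ∈ S) →
      f σ = f (σ * swap k.castSucc k.succ))
    {σ τ : Perm (Fin (m + 1))} (hστ : SameOrderOn S σ τ) : f σ = f τ := by
  induction hd : (disagreements σ τ).card using Nat.strong_induction_on generalizing σ with
  | _ d ih =>
    obtain rfl | hne := eq_or_ne σ τ
    · rfl
    obtain ⟨k, hk⟩ := exists_succ_lt_castSucc_of_ne_one (f := τ⁻¹ * σ) (by
      rwa [Ne, inv_mul_eq_one, eq_comm])
    have hS : ¬(σ k.castSucc ∈ S ∧ σ k.succ ∈ S) := fun ⟨h, h'⟩ =>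
      hk.not_gt <| (hστ _ h _ h').1 (by simp)
    rw [hf σ k hS]
    exact ih _ (hd ▸ Finset.card_lt_card (disagreements_mul_swap_ssubset hk))
      ((sameOrderOn_mul_swap hS).symm.trans hστ) rfl

theorem forall_eq_mul_swap_iff_forall_sameOrderOn {β : Type*} {S : Finset (Fin (m + 1))}
    (f : Perm (Fin (m + 1)) → β) :
    (∀ σ (k : Fin m), ¬(σ k.castSucc ∈ S ∧ σ k.succ ∈ S) →
      f σ = f (σ * swap k.castSucc k.succ)) ↔
      ∀ σ τ, SameOrderOn S σ τ → f σ = f τ :=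
  ⟨fun hf _ _ => eq_of_sameOrderOn hf, fun h _ _ hS => h _ _ (sameOrderOn_mul_swap hS)⟩

end Equiv.Perm

/-- Let `W = R[x₁,x₂,x₃,x₄]/(x₁²,x₂²,x₃²,x₄²)` and, for each permutation `σ` of `{1,2,3,4}`,
let `θ^σ ∈ W` have coefficient family `a_S^σ`, i.e. `θ^σ = Σ_S a_S^σ ∏_{i∈S} x_i`.
Then the following are equivalent:
(i) for every `σ` and every position `k`, with `i = σ k`, `j = σ (k+1)` and `τ` the
permutation obtained from `σ` by interchanging the adjacent entries in positions `k`, `k+1`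
of the word of `σ`, the difference `θ^σ - θ^τ` lies in the ideal generated by `x_i·x_j`;
(ii) whenever two permutations `σ, τ` induce the same relative order on a subset `S`,
the coefficients `a_S^σ` and `a_S^τ` coincide. -/
theorem adjacent_interchange_iff_relative_order {R : Type*} [CommRing R]
    (θ : Equiv.Perm (Fin 4) → MvPolynomial (Fin 4) R ⧸ sqIdeal4 R)
    (a : Equiv.Perm (Fin 4) → Finset (Fin 4) → R)
    (hθ : ∀ σ : Equiv.Perm (Fin 4), θ σ = Ideal.Quotient.mk (sqIdeal4 R)
      (∑ S : Finset (Fin 4), C (a σ S) * ∏ i ∈ S, X i)) :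
    (∀ (σ : Equiv.Perm (Fin 4)) (k : Fin 3),
        θ σ - θ (σ * Equiv.swap k.castSucc k.succ) ∈
          Ideal.span {Ideal.Quotient.mk (sqIdeal4 R) (X (σ k.castSucc) * X (σ k.succ))}) ↔
      (∀ (S : Finset (Fin 4)) (σ τ : Equiv.Perm (Fin 4)),
        (∀ i ∈ S, ∀ i' ∈ S, (σ⁻¹ i < σ⁻¹ i' ↔ τ⁻¹ i < τ⁻¹ i')) → a σ S = a τ S) := by
  have hne : ∀ (σ : Equiv.Perm (Fin 4)) (k : Fin 3), σ k.castSucc ≠ σ k.succ :=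
    fun σ _ => σ.injective.ne Fin.castSucc_lt_succ.ne
  have hdiff : ∀ σ τ, θ σ - θ τ = Ideal.Quotient.mk (sqIdeal4 R)
      (∑ S : Finset (Fin 4), C (a σ S - a τ S) * ∏ i ∈ S, X i) := by
    intro σ τ
    rw [hθ, hθ, ← map_sub, ← Finset.sum_sub_distrib]
    simp only [C_sub, sub_mul]
  calc
    _ ↔ ∀ (σ : Equiv.Perm (Fin 4)) (k : Fin 3) (S : Finset (Fin 4)),
        ¬(σ k.castSucc ∈ S ∧ σ k.succ ∈ S) → a σ S = a (σ * Equiv.swap k.castSucc k.succ) S := by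
      refine forall₂_congr fun σ k => ?_
      rw [hdiff]
      exact (mk_sum_C_mul_prod_X_mem_span_iff (hne σ k) _).trans
        (forall₂_congr fun _ _ => sub_eq_zero)
    _ ↔ ∀ (S : Finset (Fin 4)) (σ : Equiv.Perm (Fin 4)) (k : Fin 3),
        ¬(σ k.castSucc ∈ S ∧ σ k.succ ∈ S) → a σ S = a (σ * Equiv.swap k.castSucc k.succ) S :=
      ⟨fun h S σ k => h σ k S, fun h σ k S => h S σ k⟩
    _ ↔ _ := forall_congr' fun S => Equiv.Perm.forall_eq_mul_swap_iff_forall_sameOrderOn _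
end

section
/- Let R be a commutative ring and let W = R[x₁,x₂,x₃,x₄]/(x₁²,x₂²,x₃²,x₄²). For each permutation σ of {1,2,3,4} let θ^σ ∈ W, with coefficient family (a_S^σ)_{S⊆{1,2,3,4}} defined by θ^σ = Σ_S a_S^σ ∏_{i∈S} x_i. Assume that for every permutation σ, every position k ∈ {1,2,3}, with i = σ(k), j = σ(k+1), and τ the permutation obtained from σ by interchanging the adjacent entries in positions k and k+1 of the word σ(1)σ(2)σ(3)σ(4), the difference θ^σ − θ^τ lies in the ideal of W generated by x_i·x_j. Then there exists a unique family of elements b_{S,ω} ∈ R, indexed by pairs consisting of a subset S ⊆ {1,2,3,4} and a linear order ω on S, such that for every permutation σ and every subset S one has a_S^σ = b_{S,ω_σ(S)}, where ω_σ(S) is the linear order induced on S by the order of appearance of its elements in the word σ(1)σ(2)σ(3)σ(4). -/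
/-!
Modulo `(x_v²)`, the ideal `(x_i x_j)` becomes a monomial ideal whose generators `x_i x_j`, `x_v²`
do not divide `∏_{l ∈ S} x_l` unless `i, j ∈ S`. So the compatibility condition says that
`a_S^σ` does not change when two adjacent letters of `σ`, not both in `S`, are swapped. Such swaps
connect any two permutations `σ ≠ τ` that order `S` alike: some adjacent pair of `σ` appears in
the opposite order in `τ`; it cannot lie in `S`, and swapping it brings `σ` closer to `τ`
(bubble sort). Hence `a` is constant on the fibres of `(σ, S) ↦ ω_σ(S)`, which is onto, so `a`
factors through it uniquely.
-/

open MvPolynomial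

/-- A pair consisting of a subset `S ⊆ {1,2,3,4}` together with a linear order on `S`,
encoded as a duplicate-free list of elements of `Fin 4` (the set of entries of the list is
`S`, and the order of appearance in the list is the linear order). -/
abbrev OrderedSubset : Type :=
  {l : List (Fin 4) // l.Nodup}

/-- The linear order `ω_σ(S)` induced on the subset `S` by the order of appearance of its
elements in the word `σ(1)σ(2)σ(3)σ(4)`, encoded as a duplicate-free list. -/
def inducedOrder (σ : Equiv.Perm (Fin 4)) (S : Finset (Fin 4)) : OrderedSubset :=
  ⟨(List.ofFn fun k : Fin 4 => σ k).filter (fun i => decide (i ∈ S)),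
    (List.nodup_ofFn.mpr σ.injective).filter _⟩

namespace Function

theorem FactorsThrough.existsUnique_of_surjective {α β γ : Type*} {f : α → β} {g : α → γ}
    (hg : g.FactorsThrough f) (hf : f.Surjective) : ∃! e : β → γ, ∀ x, g x = e (f x) := by
  refine ⟨g ∘ surjInv hf, fun x => hg (surjInv_eq hf (f x)).symm, fun e he => ?_⟩
  refine hf.injective_comp_right (funext fun x => ?_)
  simp only [comp_apply, he, surjInv_eq hf (f x)]

end Function

namespace MvPolynomial

section SquarefreeMonomial

variable {ι R : Type*}

noncomputable def squarefreeExponent (S : Finset ι) : ι →₀ ℕ :=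
  ∑ i ∈ S, Finsupp.single i 1

theorem squarefreeExponent_apply [DecidableEq ι] (S : Finset ι) (i : ι) :
    squarefreeExponent S i = if i ∈ S then 1 else 0 := by
  simp [squarefreeExponent, Finsupp.finsetSum_apply, Finsupp.single_apply]

theorem squarefreeExponent_injective : Function.Injective (squarefreeExponent (ι := ι)) := by
  classical
  intro S T h
  ext i
  have := DFunLike.congr_fun h i
  simp only [squarefreeExponent_apply] at this
  split_ifs at this <;> simp_all

theorem prod_X_eq_monomial_squarefreeExponent [CommSemiring R] (S : Finset ι) :
    ∏ i ∈ S, (X i : MvPolynomial ι R) = monomial (squarefreeExponent S) 1 :=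
  (monomial_sum_one S _).symm

theorem coeff_squarefreeExponent_sum [CommSemiring R] [Fintype ι] (a : Finset ι → R)
    (S : Finset ι) :
    coeff (squarefreeExponent S) (∑ T : Finset ι, C (a T) * ∏ i ∈ T, X i) = a S := by
  classical
  simp only [coeff_sum, prod_X_eq_monomial_squarefreeExponent, C_mul_monomial, mul_one,
    coeff_monomial, squarefreeExponent_injective.eq_iff]
  simp

theorem coeff_eq_zero_of_mem_span_monomial [CommSemiring R] {f : MvPolynomial ι R}
    {E : Set (ι →₀ ℕ)} {m : ι →₀ ℕ} (hf : f ∈ Ideal.span ((fun s => monomial s (1 : R)) '' E))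
    (hm : ∀ s ∈ E, ¬s ≤ m) : coeff m f = 0 := by
  by_contra h
  obtain ⟨s, hs, hle⟩ := mem_ideal_span_monomial_image.1 hf m (mem_support_iff.2 h)
  exact hm s hs hle

theorem coeff_squarefreeExponent_eq_of_sub_mem_span [CommRing R] {f g : MvPolynomial ι R}
    {i j : ι} {S : Finset ι}
    (h : Ideal.Quotient.mk (Ideal.span (Set.range fun v => X v ^ 2)) f -
        Ideal.Quotient.mk (Ideal.span (Set.range fun v => X v ^ 2)) g ∈
      Ideal.span {Ideal.Quotient.mk (Ideal.span (Set.range fun v => X v ^ 2)) (X i * X j)})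
    (hS : ¬(i ∈ S ∧ j ∈ S)) :
    coeff (squarefreeExponent S) f = coeff (squarefreeExponent S) g := by
  classical
  have hgen : {X i * X j} ∪ Set.range (fun v => X v ^ 2) = (fun s => monomial s (1 : R)) ''
      ({Finsupp.single i 1 + Finsupp.single j 1} ∪ Set.range fun v => Finsupp.single v 2) := by
    rw [Set.image_union, Set.image_singleton, ← Set.range_comp, X, X, monomial_mul, one_mul]
    simp only [Function.comp_def, X_pow_eq_monomial]
  rw [← map_sub, ← Set.image_singleton, ← Ideal.map_span, Ideal.mem_quotient_iff_mem_sup,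
    ← Ideal.span_union, hgen] at h
  rw [← sub_eq_zero, ← coeff_sub]
  refine coeff_eq_zero_of_mem_span_monomial h ?_
  have hle : ∀ k n, Finsupp.single k n ≤ squarefreeExponent S → n ≤ if k ∈ S then 1 else 0 :=
    fun k n h => by rwa [Finsupp.single_le_iff, squarefreeExponent_apply] at h
  rintro s (rfl | ⟨v, rfl⟩) hs
  · have hi := hle i 1 (le_self_add.trans hs)
    have hj := hle j 1 (le_add_self.trans hs)
    split_ifs at hi hj with hiS hjS <;> first | omega | exact hS ⟨hiS, hjS⟩
  · have := hle v 2 hs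
    split_ifs at this <;> omega

end SquarefreeMonomial

end MvPolynomial

theorem Equiv.Perm.exists_ofFn_eq {n : ℕ} {w : List (Fin n)} (hw : w.Nodup)
    (hmem : ∀ i, i ∈ w) :
    ∃ σ : Equiv.Perm (Fin n), List.ofFn σ = w := by
  let e := hw.getEquivOfForallMemList w hmem
  have hlen : w.length = n := by simpa using Fintype.card_congr e
  refine ⟨(finCongr hlen.symm).trans e, List.ext_get (by simp [hlen]) fun k _ _ => ?_⟩
  simp [e]

section InducedOrder

open Equiv

theorem toFinset_inducedOrder (σ : Perm (Fin 4)) (S : Finset (Fin 4)) :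
    (inducedOrder σ S).1.toFinset = S := by
  ext i
  simp only [inducedOrder, List.mem_toFinset, List.mem_filter, List.mem_ofFn, decide_eq_true_eq]
  exact and_iff_right (σ.surjective i)

theorem exists_inducedOrder_eq (ω : OrderedSubset) : ∃ σ, inducedOrder σ ω.1.toFinset = ω := by
  let w := ω.1 ++ (List.finRange 4).filter (· ∉ ω.1)
  have hw : w.Nodup := ω.2.append ((List.nodup_finRange 4).filter _)
    (List.disjoint_left.2 fun _ _ _ => by simp_all)
  obtain ⟨σ, hσ⟩ := Perm.exists_ofFn_eq hw (fun i => by by_cases i ∈ ω.1 <;> simp [w, *])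
  refine ⟨σ, Subtype.ext ?_⟩
  change (List.ofFn σ).filter (· ∈ ω.1.toFinset) = ω.1
  rw [hσ, List.filter_append, List.filter_eq_self.2 (by simp), List.filter_eq_nil_iff.2 (by simp),
    List.append_nil]

theorem surjective_inducedOrder : Function.Surjective (Function.uncurry inducedOrder) :=
  fun ω => (exists_inducedOrder_eq ω).elim fun σ h => ⟨(σ, _), h⟩

def kendallDist (σ τ : Perm (Fin 4)) : ℕ :=
  (Finset.univ.filter fun p : Fin 4 × Fin 4 =>
    p.1 < p.2 ∧ ((σ⁻¹ p.1 < σ⁻¹ p.2) ≠ (τ⁻¹ p.1 < τ⁻¹ p.2))).card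

theorem inducedOrder_mul_swap_of_not_mem :
    ∀ (σ : Perm (Fin 4)) (S : Finset (Fin 4)) (k : Fin 3),
    ¬(σ k.castSucc ∈ S ∧ σ k.succ ∈ S) →
    inducedOrder (σ * swap k.castSucc k.succ) S = inducedOrder σ S := by
  decide +kernel

theorem exists_swap_kendallDist_lt : ∀ (σ τ : Perm (Fin 4)) (S : Finset (Fin 4)),
    inducedOrder σ S = inducedOrder τ S → σ ≠ τ → ∃ k : Fin 3,
      ¬(σ k.castSucc ∈ S ∧ σ k.succ ∈ S) ∧
      kendallDist (σ * swap k.castSucc k.succ) τ < kendallDist σ τ := by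
  decide +kernel

theorem eq_of_inducedOrder_eq {α : Type*} {S : Finset (Fin 4)} (f : Perm (Fin 4) → α)
    (hf : ∀ σ (k : Fin 3), ¬(σ k.castSucc ∈ S ∧ σ k.succ ∈ S) →
      f (σ * swap k.castSucc k.succ) = f σ)
    {σ τ : Perm (Fin 4)} (h : inducedOrder σ S = inducedOrder τ S) : f σ = f τ := by
  induction hd : kendallDist σ τ using Nat.strong_induction_on generalizing σ with
  | _ n ih =>
  by_cases hστ : σ = τ
  · rw [hστ]
  obtain ⟨k, hk, hlt⟩ := exists_swap_kendallDist_lt σ τ S h hστ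
  rw [← hf σ k hk]
  exact ih _ (hd ▸ hlt) ((inducedOrder_mul_swap_of_not_mem σ S k hk).trans h) rfl

end InducedOrder

/-- Let `W = R[x₁,x₂,x₃,x₄]/(x₁²,x₂²,x₃²,x₄²)` and, for each permutation `σ` of `{1,2,3,4}`,
let `θ^σ ∈ W` have coefficient family `a_S^σ`, i.e. `θ^σ = Σ_S a_S^σ ∏_{i∈S} x_i`.  Assume
that for every `σ` and every position `k`, with `i = σ k` and `j = σ (k+1)` and `τ` the
permutation obtained from `σ` by interchanging the adjacent entries in positions `k`, `k+1`
of the word of `σ`, the difference `θ^σ - θ^τ` lies in the ideal generated by `x_i·x_j`.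
Then there is a unique family `b`, indexed by pairs of a subset `S ⊆ {1,2,3,4}` and a linear
order `ω` on `S`, with `a_S^σ = b (S, ω_σ(S))` for all `σ` and `S`, where `ω_σ(S)` is the
order induced on `S` by the word of `σ`. -/
theorem factor_through_ordered_subsets {R : Type*} [CommRing R]
    (θ : Equiv.Perm (Fin 4) → MvPolynomial (Fin 4) R ⧸ sqIdeal4 R)
    (a : Equiv.Perm (Fin 4) → Finset (Fin 4) → R)
    (hθ : ∀ σ : Equiv.Perm (Fin 4), θ σ = Ideal.Quotient.mk (sqIdeal4 R)
      (∑ S : Finset (Fin 4), C (a σ S) * ∏ i ∈ S, X i))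
    (hcomp : ∀ (σ : Equiv.Perm (Fin 4)) (k : Fin 3),
      θ σ - θ (σ * Equiv.swap k.castSucc k.succ) ∈
        Ideal.span {Ideal.Quotient.mk (sqIdeal4 R) (X (σ k.castSucc) * X (σ k.succ))}) :
    ∃! b : OrderedSubset → R,
      ∀ (σ : Equiv.Perm (Fin 4)) (S : Finset (Fin 4)), a σ S = b (inducedOrder σ S) := by
  have hswap : ∀ S σ (k : Fin 3), ¬(σ k.castSucc ∈ S ∧ σ k.succ ∈ S) →
      a (σ * Equiv.swap k.castSucc k.succ) S = a σ S := by
    intro S σ k hS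
    have h := hcomp σ k
    rw [hθ, hθ] at h
    simpa only [coeff_squarefreeExponent_sum] using
      (coeff_squarefreeExponent_eq_of_sub_mem_span h hS).symm
  have hfactor : (Function.uncurry a).FactorsThrough (Function.uncurry inducedOrder) := by
    rintro ⟨σ, S⟩ ⟨τ, T⟩ h
    obtain rfl : S = T := by
      simpa only [Function.uncurry_apply_pair, toFinset_inducedOrder] using
        congrArg (·.1.toFinset) h
    exact eq_of_inducedOrder_eq (a · S) (hswap S) h
  simpa only [Prod.forall, Function.uncurry_apply_pair] using
    hfactor.existsUnique_of_surjective surjective_inducedOrder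
end
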